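/- arXiv:2106.11115 — 11 statements merged into one kernel-verified Lean document; each statement's English description precedes it below -/
import Mathlib

section
/- The category TopCat of topological spaces is strongly compact: every functor F : TopCat ⥤ C into any locally small category C that preserves all small colimits has a right adjoint. -/
/-!
By the special adjoint functor theorem it suffices that `TopCat` is cocomplete, has a small
separating set and is well-copowered. The point separates, since continuous maps are determined
by their values. An epimorphism `X ⟶ Y` is a continuous surjection, so up to isomorphism under
`X` it is the projection onto `X ⧸ s` for its kernel setoid `s`, with some topology making the
projection continuous; these pairs form a `u`-small type.
-/

open CategoryTheory CategoryTheory.Limits Opposite Topology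

universe w u

namespace CategoryTheory

lemma small_subobject_op_of_epi_representatives {C : Type*} [Category C] {X : C} {ι : Type w}
    (Q : ι → C) (q : ∀ i, X ⟶ Q i) [∀ i, Epi (q i)]
    (h : ∀ {Y : C} (g : X ⟶ Y) [Epi g], ∃ i, ∃ e : Y ≅ Q i, g ≫ e.hom = q i) :
    Small.{w} (Subobject (op X)) := by
  refine small_of_surjective (f := fun i => Subobject.mk (q i).op) ?_
  refine Subobject.ind _ fun {A} g _ => ?_
  obtain ⟨i, e, he⟩ := h g.unop
  exact ⟨i, Subobject.mk_eq_mk_of_comm _ _ e.op (Quiver.Hom.unop_inj he)⟩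

end CategoryTheory

namespace TopCat

lemma isSeparator_punit : IsSeparator (TopCat.of PUnit.{u + 1}) := by
  refine (isSeparator_def _).2 fun X Y f g h => ?_
  ext x
  exact ConcreteCategory.congr_hom (h (ofHom ⟨fun _ => x, continuous_const⟩)) PUnit.unit

variable (X : TopCat.{u})

abbrev QuotientDatum : Type u :=
  Σ s : Setoid X, {t : TopologicalSpace (Quotient s) // Continuous[_, t] (Quotient.mk s)}

variable {X}

abbrev QuotientDatum.obj (d : QuotientDatum X) : TopCat.{u} :=
  @TopCat.of (Quotient d.1) d.2.1

def QuotientDatum.proj (d : QuotientDatum X) : X ⟶ d.obj :=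
  @ofHom _ _ _ d.2.1 (@ContinuousMap.mk _ _ _ d.2.1 (Quotient.mk d.1) d.2.2)

instance (d : QuotientDatum X) : Epi d.proj :=
  (epi_iff_surjective _).2 fun y => Quotient.exists_rep y

lemma exists_iso_proj_of_epi {Y : TopCat.{u}} (g : X ⟶ Y) [Epi g] :
    ∃ d : QuotientDatum X, ∃ e : Y ≅ d.obj, g ≫ e.hom = d.proj := by
  let β := Setoid.quotientKerEquivOfSurjective g ((epi_iff_surjective g).1 ‹_›)
  let t : TopologicalSpace (Quotient (Setoid.ker g)) := .induced β inferInstance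
  have hproj : Continuous[_, t] (Quotient.mk (Setoid.ker g)) :=
    continuous_induced_rng.2 g.hom.continuous
  let e : Y ≃ₜ @TopCat.of _ t := (@Equiv.toHomeomorphOfIsInducing _ _ t _ β ⟨rfl⟩).symm
  refine ⟨⟨Setoid.ker g, t, hproj⟩, isoOfHomeo e, ?_⟩
  ext x
  change β.symm (β (Quotient.mk _ x)) = Quotient.mk _ x
  exact β.symm_apply_apply _

instance wellPowered_opposite : WellPowered.{u} TopCat.{u}ᵒᵖ where
  subobject_small X :=
    small_subobject_op_of_epi_representatives _ (fun d : QuotientDatum X.unop => d.proj)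
      exists_iso_proj_of_epi

end TopCat

theorem stmt3 {C : Type w} [Category.{u} C] (F : TopCat.{u} ⥤ C)
    [PreservesColimitsOfSize.{u, u} F] :
    F.IsLeftAdjoint :=
  isLeftAdjoint_of_preservesColimits_of_isSeparating TopCat.isSeparator_punit F
end

section
/- The opposite of the category of groups is not strongly compact: there exists a functor F : Grp ⥤ Type u that preserves all small limits but is not corepresentable, i.e., F is not naturally isomorphic to Hom(G, −) for any group G. -/
/-!
For an infinite type `α`, the group generated by the 3-cycles of `α` (the finitary alternating
group) admits no nontrivial homomorphism to a group `G` with `#G < #α`: by pigeonhole, two of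
the 3-cycles `(a b x)` have the same image, so the kernel contains a 3-cycle, and all 3-cycles are
conjugate. Taking one such group `A κ` of cardinality at least `κ` for every cardinal `κ`, the
product `F = ∏ κ, Hom(A κ, -)` takes small values, since only the factors with `κ ≤ #G` matter,
and preserves limits as a product of corepresentable functors. If `F` were corepresented by `G`,
then for `κ > #G` the group `A κ` would be a retract of `G`, although every homomorphism
`A κ ⟶ G` is trivial.
-/

open CategoryTheory CategoryTheory.Limits Opposite

universe v w u' v'

theorem Subgroup.le_normalizer_map_subtype {G : Type*} [Group G] {H : Subgroup G}
    (K : Subgroup H) [K.Normal] : H ≤ Subgroup.normalizer (K.map H.subtype : Set G) := by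
  have := Subgroup.le_normalizer_map (H := K) H.subtype
  rwa [Subgroup.normalizer_eq_top, ← MonoidHom.range_eq_map, Subgroup.range_subtype] at this

namespace Equiv.Perm

variable {α : Type u} [DecidableEq α]

def threeCycle (a b c : α) : Perm α := swap a b * swap b c

theorem threeCycle_apply_left {a b c : α} (hab : a ≠ b) (hac : a ≠ c) :
    threeCycle a b c a = b := by
  simp [threeCycle, swap_apply_of_ne_of_ne hab hac]

theorem threeCycle_apply_of_ne {a b c x : α} (hxa : x ≠ a) (hxb : x ≠ b) (hxc : x ≠ c) :
    threeCycle a b c x = x := by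
  simp [threeCycle, swap_apply_of_ne_of_ne hxb hxc, swap_apply_of_ne_of_ne hxa hxb]

theorem conj_threeCycle (π : Perm α) (a b c : α) :
    π * threeCycle a b c * π⁻¹ = threeCycle (π a) (π b) (π c) := by
  simp only [threeCycle, swap_apply_apply]
  group

theorem threeCycle_rotate {a b c : α} (hab : a ≠ b) (hac : a ≠ c) (hbc : b ≠ c) :
    threeCycle a b c = threeCycle b c a := by
  ext z
  simp only [threeCycle, Perm.mul_apply, swap_apply_def]
  split_ifs <;> simp_all

theorem threeCycle_mul_inv_threeCycle {a b x y : α} (hab : a ≠ b) (hax : a ≠ x) (hbx : b ≠ x)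
    (hay : a ≠ y) (hby : b ≠ y) (hxy : x ≠ y) :
    threeCycle a b x * (threeCycle a b y)⁻¹ = threeCycle a y x := by
  ext z
  simp only [threeCycle, mul_inv_rev, swap_inv, Perm.mul_apply, swap_apply_def]
  split_ifs <;> simp_all

variable (α) in
def finitaryAlternatingGroup : Subgroup (Perm α) :=
  Subgroup.closure {σ | ∃ a b c : α, a ≠ b ∧ a ≠ c ∧ b ≠ c ∧ threeCycle a b c = σ}

theorem threeCycle_mem_finitaryAlternatingGroup {a b c : α} (hab : a ≠ b) (hac : a ≠ c)
    (hbc : b ≠ c) : threeCycle a b c ∈ finitaryAlternatingGroup α :=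
  Subgroup.subset_closure ⟨a, b, c, hab, hac, hbc, rfl⟩

instance [Infinite α] : Nontrivial (finitaryAlternatingGroup α) := by
  obtain ⟨a, b, hab⟩ := exists_pair_ne α
  obtain ⟨c, hc⟩ := Infinite.exists_notMem_finset {a, b}
  simp only [Finset.mem_insert, Finset.mem_singleton, not_or] at hc
  have hσ := threeCycle_mem_finitaryAlternatingGroup hab (Ne.symm hc.1) (Ne.symm hc.2)
  refine (Subgroup.nontrivial_iff_exists_ne_one _).mpr ⟨_, hσ, fun h ↦ hab.symm ?_⟩
  simpa [threeCycle_apply_left hab (Ne.symm hc.1)] using congr($h a)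

section Normal

variable [Infinite α] {N : Subgroup (Perm α)}
  (hN : finitaryAlternatingGroup α ≤ Subgroup.normalizer (N : Set (Perm α)))
include hN

theorem threeCycle_mem_of_mem_replace {a b c d : α} (hac : a ≠ c) (hbc : b ≠ c) (had : a ≠ d)
    (hbd : b ≠ d) (h : threeCycle a b c ∈ N) : threeCycle a b d ∈ N := by
  rcases eq_or_ne c d with rfl | hcd
  · exact h
  obtain ⟨w, hw⟩ := Infinite.exists_notMem_finset {a, b, c, d}
  simp only [Finset.mem_insert, Finset.mem_singleton, not_or] at hw
  obtain ⟨hwa, hwb, hwc, hwd⟩ := hw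
  have hπ := threeCycle_mem_finitaryAlternatingGroup hcd (Ne.symm hwc) (Ne.symm hwd)
  have := (Subgroup.mem_normalizer_iff.mp (hN hπ) _).mp h
  rwa [conj_threeCycle, threeCycle_apply_of_ne hac had (Ne.symm hwa),
    threeCycle_apply_of_ne hbc hbd (Ne.symm hwb), threeCycle_apply_left hcd (Ne.symm hwc)] at this

theorem threeCycle_mem_of_mem_of_ne {a b c p q r : α} (hab : a ≠ b) (hac : a ≠ c)
    (hbc : b ≠ c) (hpq : p ≠ q) (hpr : p ≠ r) (hqr : q ≠ r) (hpb : p ≠ b) (hpc : p ≠ c)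
    (hqc : q ≠ c) (h : threeCycle a b c ∈ N) : threeCycle p q r ∈ N := by
  rw [threeCycle_rotate hab hac hbc] at h
  have hbcp := threeCycle_mem_of_mem_replace hN hab.symm hac.symm hpb.symm hpc.symm h
  rw [threeCycle_rotate hbc hpb.symm hpc.symm] at hbcp
  have hcpq := threeCycle_mem_of_mem_replace hN hbc.symm hpb hqc.symm hpq hbcp
  rw [threeCycle_rotate hpc.symm hqc.symm hpq] at hcpq
  exact threeCycle_mem_of_mem_replace hN hpc hqc hpr hqr hcpq

theorem finitaryAlternatingGroup_le_of_threeCycle_mem {a b c : α} (hab : a ≠ b) (hac : a ≠ c)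
    (hbc : b ≠ c) (h : threeCycle a b c ∈ N) : finitaryAlternatingGroup α ≤ N := by
  refine (Subgroup.closure_le N).mpr ?_
  rintro _ ⟨a', b', c', hab', hac', hbc', rfl⟩
  obtain ⟨p, hp⟩ := Infinite.exists_notMem_finset {a, b, c, a', b', c'}
  obtain ⟨q, hq⟩ := Infinite.exists_notMem_finset {a, b, c, a', b', c', p}
  obtain ⟨r, hr⟩ := Infinite.exists_notMem_finset {a, b, c, a', b', c', p, q}
  simp only [Finset.mem_insert, Finset.mem_singleton, not_or] at hp hq hr
  have hpqr : threeCycle p q r ∈ N :=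
    threeCycle_mem_of_mem_of_ne hN hab hac hbc (by grind) (by grind) (by grind) (by grind)
      (by grind) (by grind) h
  exact threeCycle_mem_of_mem_of_ne hN (by grind) (by grind) (by grind) hab' hac' hbc'
    (by grind) (by grind) (by grind) hpqr

end Normal

theorem finitaryAlternatingGroup_hom_eq_one [Infinite α] {G : Type v} [Group G]
    (f : finitaryAlternatingGroup α →* G)
    (hG : Cardinal.lift.{u} (Cardinal.mk G) < Cardinal.lift.{v} (Cardinal.mk α)) : f = 1 := by
  obtain ⟨a, b, hab⟩ := exists_pair_ne α
  let S : Set α := (({a, b} : Finset α) : Set α)ᶜ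
  have hne (x : S) : a ≠ x ∧ b ≠ x := by
    obtain ⟨x, hx⟩ := x
    simp only [S, Finset.coe_insert, Finset.coe_singleton, Set.mem_compl_iff, Set.mem_insert_iff,
      Set.mem_singleton_iff, not_or] at hx
    exact ⟨Ne.symm hx.1, Ne.symm hx.2⟩
  let g (x : S) : G :=
    f ⟨threeCycle a b x, threeCycle_mem_finitaryAlternatingGroup hab (hne x).1 (hne x).2⟩
  obtain ⟨x, y, hg, hxy⟩ := (Function.not_injective_iff (f := g)).mp fun hinj ↦ hG.not_ge <| by
    simpa only [S, Cardinal.mk_compl_finset_of_infinite] using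
      Cardinal.lift_mk_le_lift_mk_of_injective hinj
  have hyx : (y : α) ≠ x := fun h ↦ hxy (Subtype.ext h.symm)
  have hker : threeCycle a y x ∈ f.ker.map (finitaryAlternatingGroup α).subtype := by
    refine ⟨⟨_, threeCycle_mem_finitaryAlternatingGroup hab (hne x).1 (hne x).2⟩ *
      ⟨_, threeCycle_mem_finitaryAlternatingGroup hab (hne y).1 (hne y).2⟩⁻¹, ?_,
      threeCycle_mul_inv_threeCycle hab (hne x).1 (hne x).2 (hne y).1 (hne y).2 hyx.symm⟩
    rw [SetLike.mem_coe, MonoidHom.mem_ker, map_mul, map_inv]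
    exact mul_inv_eq_one.mpr hg
  have := finitaryAlternatingGroup_le_of_threeCycle_mem
    (Subgroup.le_normalizer_map_subtype f.ker) (hne y).1 (hne x).1 hyx hker
  ext σ
  exact (Subgroup.mem_map_iff_mem (Subgroup.subtype_injective _)).mp (this σ.2)

end Equiv.Perm

namespace CategoryTheory.FunctorToTypes

variable {C : Type*} [Category C]

def pi {ι : Type w} (F : ι → C ⥤ Type v) : C ⥤ Type (max w v) where
  obj X := ∀ i, (F i).obj X
  map f := ↾fun x i ↦ (F i).map f (x i)

instance {J : Type*} [Category J] {ι : Type w} (F : ι → C ⥤ Type v)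
    [∀ i, PreservesLimitsOfShape J (F i)] : PreservesLimitsOfShape J (pi F) where
  preservesLimit {K} := ⟨fun {c} hc ↦ by
    show Nonempty _
    refine (Types.isLimit_iff ((pi F).mapCone c)).mpr fun s hs ↦ ?_
    have hsec (i : ι) : (fun j ↦ s j i) ∈ (K ⋙ F i).sections := fun φ ↦ congrFun (hs φ) i
    choose x hx hxu using fun i ↦
      (Types.isLimit_iff ((F i).mapCone c)).mp ⟨isLimitOfPreserves (F i) hc⟩ _ (hsec i)
    exact ⟨x, fun j ↦ funext fun i ↦ hx i j,
      fun y hy ↦ funext fun i ↦ hxu i (y i) fun j ↦ congrFun (hy j) i⟩⟩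

instance {ι : Type w} (F : ι → C ⥤ Type v) [∀ i, PreservesLimitsOfSize.{v', u'} (F i)] :
    PreservesLimitsOfSize.{v', u'} (pi F) where

noncomputable def shrinkCompUliftFunctorIsoCompUliftFunctor (F : C ⥤ Type v)
    [FunctorToTypes.Small.{w} F] : shrink.{w} F ⋙ uliftFunctor.{v} ≅ F ⋙ uliftFunctor.{w} :=
  NatIso.ofComponents
    (fun X ↦ Equiv.toIso (Equiv.ulift.trans ((equivShrink _).symm.trans Equiv.ulift.symm)))
    (fun f ↦ by ext x; exact congrArg ULift.up ((equivShrink _).symm_apply_apply _))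

instance (F : C ⥤ Type v) [FunctorToTypes.Small.{w} F] [PreservesLimitsOfSize.{v', u'} F] :
    PreservesLimitsOfSize.{v', u'} (shrink.{w} F) :=
  have : PreservesLimitsOfSize.{v', u'} (shrink.{w} F ⋙ uliftFunctor.{v}) :=
    preservesLimits_of_natIso (shrinkCompUliftFunctorIsoCompUliftFunctor F).symm
  preservesLimits_of_reflects_of_preserves _ uliftFunctor.{v}

end CategoryTheory.FunctorToTypes

-- `κ.out` makes the permuted type of cardinality at least `κ`, the summand `ℕ` makes it
-- infinite.
open scoped Classical in
noncomputable def largeAlternatingGroup (κ : Cardinal.{u}) : GrpCat.{u} :=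
  GrpCat.of (Equiv.Perm.finitaryAlternatingGroup (κ.out ⊕ ULift.{u} ℕ))

instance (κ : Cardinal.{u}) : Nontrivial (largeAlternatingGroup κ) := by
  unfold largeAlternatingGroup; infer_instance

theorem subsingleton_largeAlternatingGroup_hom {κ : Cardinal.{u}} {G : GrpCat.{u}}
    (hG : Cardinal.mk G < κ) : Subsingleton (largeAlternatingGroup κ ⟶ G) := by
  refine ⟨fun f g ↦ ?_⟩
  have hκ : κ ≤ Cardinal.mk (κ.out ⊕ ULift.{u} ℕ) :=
    (Cardinal.mk_out κ).symm.trans_le (Cardinal.mk_le_of_injective Sum.inl_injective)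
  have (f : largeAlternatingGroup κ ⟶ G) : f.hom = 1 := by
    classical
    exact Equiv.Perm.finitaryAlternatingGroup_hom_eq_one _ (by simpa using hG.trans_le hκ)
  ext x
  simp [this]

theorem GrpCat.subsingleton_of_retract {S G : GrpCat.{u}} (h : Retract S G)
    [Subsingleton (S ⟶ G)] : Subsingleton S := by
  refine ⟨fun s t ↦ ?_⟩
  have (x : S) : x = 1 := by
    simpa [Subsingleton.elim h.i (GrpCat.ofHom 1)] using
      (ConcreteCategory.congr_hom h.retract x).symm
  rw [this s, this t]

noncomputable def piCoyonedaLargeAlternating : GrpCat.{u} ⥤ Type (u + 1) :=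
  FunctorToTypes.pi fun κ : Cardinal.{u} ↦ coyoneda.obj (op (largeAlternatingGroup κ))

instance : FunctorToTypes.Small.{u} piCoyonedaLargeAlternating.{u} := fun G ↦ by
  refine small_of_injective (f := fun x (κ : Set.Iic (Cardinal.mk G)) ↦ x κ) fun x y hxy ↦ ?_
  funext κ
  by_cases hκ : κ ≤ Cardinal.mk G
  · exact congrFun hxy ⟨κ, hκ⟩
  · have := subsingleton_largeAlternatingGroup_hom (not_le.mp hκ)
    exact Subsingleton.elim _ _

noncomputable def largeAlternatingCoyoneda : GrpCat.{u} ⥤ Type u :=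
  FunctorToTypes.shrink.{u} piCoyonedaLargeAlternating

noncomputable instance : PreservesLimitsOfSize.{u, u} piCoyonedaLargeAlternating.{u} :=
  inferInstanceAs (PreservesLimitsOfSize (FunctorToTypes.pi _))

noncomputable instance : PreservesLimitsOfSize.{u, u} largeAlternatingCoyoneda.{u} :=
  inferInstanceAs <|
    PreservesLimitsOfSize (FunctorToTypes.shrink.{u} piCoyonedaLargeAlternating)

noncomputable def largeAlternatingCoyonedaObjEquiv (G : GrpCat.{u}) :
    largeAlternatingCoyoneda.obj G ≃ ∀ κ : Cardinal.{u}, largeAlternatingGroup κ ⟶ G :=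
  (equivShrink _).symm

theorem largeAlternatingCoyonedaObjEquiv_map {G H : GrpCat.{u}} (f : G ⟶ H)
    (x : largeAlternatingCoyoneda.obj G) (κ : Cardinal.{u}) :
    largeAlternatingCoyonedaObjEquiv H (largeAlternatingCoyoneda.map f x) κ =
      largeAlternatingCoyonedaObjEquiv G x κ ≫ f :=
  congrFun ((equivShrink (piCoyonedaLargeAlternating.obj H)).symm_apply_apply _) κ

theorem not_isCorepresentable_largeAlternatingCoyoneda :
    ¬ largeAlternatingCoyoneda.{u}.IsCorepresentable := by
  rintro ⟨G, ⟨e⟩⟩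
  classical
  set κ := Order.succ (Cardinal.mk G)
  set S := largeAlternatingGroup κ
  have hsub := subsingleton_largeAlternatingGroup_hom (G := G) (Order.lt_succ _)
  let φ := largeAlternatingCoyonedaObjEquiv
  let r := e.homEquiv.symm ((φ S).symm (Function.update (fun _ ↦ GrpCat.ofHom 1) κ (𝟙 S)))
  have hu : (φ S).symm (Function.update (fun _ ↦ GrpCat.ofHom 1) κ (𝟙 S)) =
      largeAlternatingCoyoneda.map r (e.homEquiv (𝟙 G)) := by
    rw [← e.homEquiv_eq, Equiv.apply_symm_apply]
  have hir : φ G (e.homEquiv (𝟙 G)) κ ≫ r = 𝟙 S := by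
    have := congr(φ S $hu κ)
    rw [largeAlternatingCoyonedaObjEquiv_map, Equiv.apply_symm_apply] at this
    exact this.symm.trans (Function.update_self _ _ _)
  exact not_subsingleton S (GrpCat.subsingleton_of_retract ⟨_, _, hir⟩)

theorem stmt4 :
    ∃ F : GrpCat.{u} ⥤ Type u,
      Nonempty (PreservesLimitsOfSize.{u, u} F) ∧
        ¬ F.IsCorepresentable ∧
        ∀ G : GrpCat.{u}, ¬ Nonempty (F ≅ coyoneda.obj (Opposite.op G)) := by
  refine ⟨largeAlternatingCoyoneda, ⟨inferInstance⟩, not_isCorepresentable_largeAlternatingCoyoneda,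
    fun G ⟨e⟩ ↦ not_isCorepresentable_largeAlternatingCoyoneda (.mk' e.symm)⟩
end

section
/- Every functor F : TopCat ⥤ Type u that preserves all small limits is corepresentable: there exists a topological space X such that F is naturally isomorphic to the functor Hom(X, −) sending a space T to the set of continuous maps from X to T. -/
/-!
By the special adjoint functor theorem a limit-preserving `F : TopCat ⥤ Type u` has a left
adjoint `L`, and then `F T ≅ (PUnit ⟶ F T) ≅ (L PUnit ⟶ T)`. The theorem applies because
`TopCat` is complete, the indiscrete space on `Prop` is a coseparator (`y ↦ (y = f x)` tells
`f x` apart from every other point), and `TopCat` is well-powered: a mono is an injective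
continuous map, so it is isomorphic over `X` to the inclusion of its range carrying the topology
transported from the domain.
-/

open CategoryTheory CategoryTheory.Limits Topology

universe u

namespace TopCat

variable {X : TopCat.{u}}

def subsetInclusion (S : Set X) (τ : TopologicalSpace S) (h : Continuous[τ, _] ((↑) : S → X)) :
    @of S τ ⟶ X :=
  letI := τ
  ofHom ⟨_, h⟩

instance (S : Set X) (τ : TopologicalSpace S) (h : Continuous[τ, _] ((↑) : S → X)) :
    Mono (subsetInclusion S τ h) :=
  (mono_iff_injective _).2 Subtype.val_injective

theorem exists_mk_subsetInclusion_eq (P : Subobject X) :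
    ∃ S τ h, Subobject.mk (subsetInclusion S τ h) = P := by
  induction P using Subobject.ind with
  | @h A f =>
    have hf : Function.Injective f := (mono_iff_injective f).1 ‹_›
    let e : A ≃ Set.range f := Equiv.ofInjective f hf
    let τ : TopologicalSpace (Set.range f) := .induced e.symm inferInstance
    have hcont : Continuous[τ, _] ((↑) : Set.range f → X) := by
      convert f.hom.continuous.comp (continuous_induced_dom : Continuous[τ, _] e.symm)
      simp [e]
    refine ⟨_, τ, hcont, Subobject.mk_eq_mk_of_comm _ _
      (isoOfHomeo (e.symm.toHomeomorphOfIsInducing ⟨rfl⟩).symm).symm ?_⟩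
    ext x
    exact Equiv.apply_ofInjective_symm hf x

instance : WellPowered.{u} TopCat.{u} where
  subobject_small X := small_of_surjective
    (f := fun p : Σ' (S : Set X) (τ : TopologicalSpace S), Continuous[τ, _] ((↑) : S → X) =>
      Subobject.mk (subsetInclusion p.1 p.2.1 p.2.2))
    fun P => by
      obtain ⟨S, τ, h, rfl⟩ := exists_mk_subsetInclusion_eq P
      exact ⟨⟨S, τ, h⟩, rfl⟩

theorem isCoseparator_trivial_prop : IsCoseparator (trivial.obj (ULift.{u} Prop)) := by
  refine (isCoseparator_def _).2 fun Y Z f g hfg => ?_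
  ext y
  let χ : Z ⟶ trivial.obj (ULift.{u} Prop) :=
    ofHom (Y := trivial.obj _) ⟨fun z => ⟨z = f y⟩, continuous_top⟩
  have : (f y = f y) = (g y = f y) :=
    congrArg ULift.down (ConcreteCategory.congr_hom (hfg χ) y)
  exact (cast this rfl).symm

end TopCat

theorem CategoryTheory.Functor.isCorepresentable_of_isRightAdjoint {C : Type*} [Category.{v} C]
    (F : C ⥤ Type v) [F.IsRightAdjoint] : F.IsCorepresentable :=
  .mk' <| ((Adjunction.ofIsRightAdjoint F).corepresentableBy PUnit).toIso ≪≫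
    Functor.isoWhiskerLeft F Coyoneda.punitIso ≪≫ F.rightUnitor

theorem stmt5 (F : TopCat.{u} ⥤ Type u) [PreservesLimitsOfSize.{u, u} F] :
    ∃ X : TopCat.{u}, Nonempty (F ≅ coyoneda.obj (Opposite.op X)) := by
  have : F.IsRightAdjoint :=
    isRightAdjoint_of_preservesLimits_of_isCoseparating TopCat.isCoseparator_trivial_prop F
  have := F.isCorepresentable_of_isRightAdjoint
  exact ⟨F.coreprX, ⟨F.coreprW.symm⟩⟩
end

section
/- Every functor F : TopCat ⥤ Type u that preserves all small colimits is naturally isomorphic to the functor T ↦ S × |T|, where S = F(*) is the value of F at the one-point space and |T| denotes the underlying set of T. In other words, every cocontinuous functor Top → Set is a coproduct of copies of the forgetful functor. -/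
/-!
Let `S = F(*)`. The comparison `S × |T| → F T`, `(s, x) ↦ F(x)(s)` with `x` read as a map
`* → T`, is natural, and we show it is bijective. Both functors preserve colimits, so the
comparison is bijective at every colimit of spaces at which it already is. It is the identity
at `*`, hence bijective at every discrete space, a coproduct of points. Surjectivity at `T`
then follows because `F` preserves the epimorphism onto `T` from the discrete space on `|T|`.

For injectivity, maps `T → I` into the indiscrete space `I` on two points separate points, so
it suffices to treat `I`. Sending a sequence in the Cantor space to whether it takes the
value `true` infinitely often has two dense fibres, so it is a quotient map onto `I`, and `I`
is the coequalizer of its kernel pair taken with the discrete topology. The comparison is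
injective at the Cantor space because the coordinate projections to the discrete space on two
points separate points, hence bijective there, and therefore bijective at `I`.
-/

open CategoryTheory CategoryTheory.Limits

universe u

/-- The functor `T ↦ S × |T|`, i.e. the coproduct of `S` many copies of the forgetful
functor `TopCat ⥤ Type u`. -/
def prodForget (S : Type u) : TopCat.{u} ⥤ Type u where
  obj T := S × T
  map f := TypeCat.ofHom fun p => (p.1, f p.2)

open Function Filter Topology

universe v w

section

variable {C : Type*} [Category* C] {G F : C ⥤ Type u} (η : G ⟶ F)

lemma NatTrans.injective_app_of_jointlyInjective {X : C} {ι : Type*} {Y : ι → C}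
    (f : ∀ i, X ⟶ Y i) (hf : ∀ a b, (∀ i, G.map (f i) a = G.map (f i) b) → a = b)
    (hY : ∀ i, Injective (η.app (Y i))) : Injective (η.app X) := by
  refine fun a b hab => hf a b fun i => hY i ?_
  rw [NatTrans.naturality_apply, NatTrans.naturality_apply, hab]

lemma NatTrans.surjective_app_of_surjective_map {X X' : C} (ε : X' ⟶ X)
    (hε : Surjective (F.map ε)) (hX' : Surjective (η.app X')) : Surjective (η.app X) := by
  intro b
  obtain ⟨a, rfl⟩ := (hε.comp hX') b
  exact ⟨G.map ε a, NatTrans.naturality_apply η ε a⟩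

end

lemma NatTrans.isIso_app_coconePt_of_isIso_app {C D J : Type*} [Category* C] [Category* D]
    [Category* J] (K : J ⥤ C) {L L' : C ⥤ D} (α : L ⟶ L') (c : Cocone K) (hc : IsColimit c)
    [PreservesColimit K L] [PreservesColimit K L'] (h : ∀ j, IsIso (α.app (K.obj j))) :
    IsIso (α.app c.pt) :=
  have (j : J) : IsIso ((K.whiskerLeft α).app j) := h j
  have : IsIso (K.whiskerLeft α) := NatIso.isIso_of_isIso_app _
  isIso_app_coconePt_of_preservesColimit K α c hc

lemma dense_setOf_eventually_eq {ι : Type*} {X : ι → Type*} [∀ i, TopologicalSpace (X i)]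
    (c : ∀ i, X i) : Dense {g : ∀ i, X i | ∀ᶠ i in cofinite, g i = c i} := by
  classical
  intro x
  refine mem_closure_of_tendsto (f := fun s : Finset ι => s.piecewise x c) (b := atTop)
    (tendsto_pi_nhds.2 fun i => ?_) (Eventually.of_forall fun s => ?_)
  · refine tendsto_const_nhds.congr' ?_
    filter_upwards [eventually_ge_atTop {i}] with s hs
    exact (s.piecewise_eq_of_mem _ _ (Finset.singleton_subset_iff.1 hs)).symm
  · filter_upwards [s.finite_toSet.compl_mem_cofinite] with i hi
    exact s.piecewise_eq_of_notMem _ _ hi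

lemma coinduced_eq_top_of_dense_fibers {Y Z : Type*} [t : TopologicalSpace Y] [Nonempty Y]
    (f : Y → Z) (hf : ∀ z, Dense (f ⁻¹' {z})) : t.coinduced f = ⊤ := by
  ext U
  rw [isOpen_coinduced, TopologicalSpace.isOpen_top_iff]
  constructor
  · refine fun hU => U.eq_empty_or_nonempty.imp_right fun ⟨z, hz⟩ => ?_
    refine Set.eq_univ_of_forall fun z' => ?_
    obtain ⟨y, hyU, rfl⟩ := (hf z').inter_open_nonempty _ hU
      ((hf z).nonempty.mono fun y hy => by simp_all)
    exact hyU
  · rintro (rfl | rfl) <;> simp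

namespace TopCat

def isColimitCofanConstOfDiscreteTopology (T : TopCat.{u}) [DiscreteTopology T] :
    IsColimit (Cofan.mk T fun x : T => ofHom (ContinuousMap.const (TopCat.of PUnit) x)) :=
  Cofan.IsColimit.mk _
    (fun t => ofHom ⟨fun x => t.inj x PUnit.unit, continuous_of_discreteTopology⟩)
    (fun _ _ => rfl)
    (fun _ _ h => by ext x; exact ConcreteCategory.congr_hom (h x) PUnit.unit)

section

variable {Y Z : TopCat.{u}} (π : Y ⟶ Z)

abbrev discreteKernelPair : TopCat.{u} := discrete.obj {p : Y × Y // π p.1 = π p.2}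

namespace discreteKernelPair

def fst : discreteKernelPair π ⟶ Y :=
  ofHom (X := discrete.obj _) ⟨fun p => p.1.1, continuous_bot⟩

def snd : discreteKernelPair π ⟶ Y :=
  ofHom (X := discrete.obj _) ⟨fun p => p.1.2, continuous_bot⟩

lemma condition : fst π ≫ π = snd π ≫ π := by
  ext p
  exact p.2

variable {π}

lemma cofork_π_eq (s : Cofork (fst π) (snd π)) {y y' : Y} (h : π y = π y') :
    s.π y = s.π y' :=
  ConcreteCategory.congr_hom s.condition ⟨(y, y'), h⟩

noncomputable def isColimitCofork (hπ : IsQuotientMap π) :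
    IsColimit (Cofork.ofπ π (condition π)) := by
  have hπ_surjInv (s : Cofork (fst π) (snd π)) (y : Y) :
      s.π (surjInv hπ.surjective (π y)) = s.π y :=
    cofork_π_eq s (surjInv_eq hπ.surjective _)
  refine Cofork.IsColimit.mk _
    (fun s => ofHom ⟨s.π ∘ surjInv hπ.surjective, hπ.continuous_iff.2 ?_⟩)
    (fun s => ?_) (fun s m hm => ?_)
  · convert s.π.hom.continuous using 1
    exact funext (hπ_surjInv s)
  · ext y
    exact hπ_surjInv s y
  · ext z
    conv_lhs => rw [← surjInv_eq hπ.surjective z]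
    exact ConcreteCategory.congr_hom hm _

end discreteKernelPair

end

abbrev cantor : TopCat.{u} := of (ℕ → ULift.{u} Bool)

abbrev indiscreteBool : TopCat.{u} := trivial.obj (ULift.{u} Bool)

open Classical in
noncomputable def infinitelyOften : cantor.{u} ⟶ indiscreteBool.{u} :=
  ofHom (Y := trivial.obj _)
    ⟨fun y => ⟨decide (∃ᶠ n in cofinite, (y n).down)⟩, continuous_top⟩

open Classical in
lemma infinitelyOften_of_eventually_eq {y : ℕ → ULift.{u} Bool} {b : ULift.{u} Bool}
    (h : ∀ᶠ n in cofinite, y n = b) : infinitelyOften y = b := by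
  have : (∃ᶠ n in cofinite, (y n).down) ↔ b.down :=
    (frequently_congr (h.mono fun n hn => by rw [hn])).trans frequently_const
  apply ULift.ext
  change decide _ = b.down
  rw [Bool.eq_iff_iff, decide_eq_true_iff, this]

lemma isQuotientMap_infinitelyOften : IsQuotientMap (infinitelyOften.{u} : cantor → _) := by
  have hdense (b : ULift.{u} Bool) : Dense (infinitelyOften ⁻¹' {b}) :=
    (dense_setOf_eventually_eq fun _ => b).mono fun y hy => infinitelyOften_of_eventually_eq hy
  exact ⟨⟨(coinduced_eq_top_of_dense_fibers _ hdense).symm⟩, fun b => (hdense b).nonempty⟩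

end TopCat

instance preservesColimitsOfSize_prodForget (S : Type u) :
    PreservesColimitsOfSize.{v, w} (prodForget S) :=
  inferInstanceAs (PreservesColimitsOfSize (forget TopCat ⋙ MonoidalCategory.tensorLeft S))

section

variable (F : TopCat.{u} ⥤ Type u)

def prodForgetComparison : prodForget (F.obj (TopCat.of PUnit)) ⟶ F where
  app T := TypeCat.ofHom fun p => F.map (TopCat.ofHom (ContinuousMap.const _ p.2)) p.1
  naturality T T' f := by
    ext p
    exact F.map_comp_apply (TopCat.ofHom (ContinuousMap.const _ p.2)) f p.1

lemma prodForgetComparison_app_apply (T : TopCat.{u}) (s : F.obj (TopCat.of PUnit)) (x : T) :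
    (prodForgetComparison F).app T (s, x) = F.map (TopCat.ofHom (ContinuousMap.const _ x)) s :=
  rfl

lemma isIso_prodForgetComparison_app_punit :
    IsIso ((prodForgetComparison F).app (TopCat.of PUnit)) := by
  have hid (x : PUnit) : TopCat.ofHom (ContinuousMap.const (TopCat.of PUnit) x) = 𝟙 _ := rfl
  have happ (p : F.obj (TopCat.of PUnit) × PUnit) :
      (prodForgetComparison F).app (TopCat.of PUnit) p = p.1 := by
    rw [prodForgetComparison_app_apply, hid, Functor.map_id_apply]
  refine (isIso_iff_bijective _).2
    ⟨fun p p' h => Prod.ext ?_ (Subsingleton.elim _ _), fun s => ⟨(s, .unit), happ _⟩⟩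
  exact (happ p).symm.trans (h.trans (happ p'))

variable [PreservesColimitsOfSize.{u, u} F]

lemma bijective_prodForgetComparison_app_of_discreteTopology (T : TopCat.{u})
    [DiscreteTopology T] : Bijective ((prodForgetComparison F).app T) :=
  (isIso_iff_bijective _).1 <| NatTrans.isIso_app_coconePt_of_isIso_app _ _ _
    (TopCat.isColimitCofanConstOfDiscreteTopology T)
    fun _ => isIso_prodForgetComparison_app_punit F

lemma surjective_prodForgetComparison_app (T : TopCat.{u}) :
    Surjective ((prodForgetComparison F).app T) := by
  have : PreservesColimitsOfSize.{0, 0} F := preservesColimitsOfSize_shrink F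
  let ε : TopCat.discrete.obj T ⟶ T :=
    TopCat.ofHom (X := TopCat.discrete.obj T) ⟨id, continuous_bot⟩
  have : Epi ε := (TopCat.epi_iff_surjective _).2 fun x => ⟨x, rfl⟩
  exact NatTrans.surjective_app_of_surjective_map _ ε ((epi_iff_surjective _).1 inferInstance)
    (bijective_prodForgetComparison_app_of_discreteTopology F _).2

lemma bijective_prodForgetComparison_app_cantor :
    Bijective ((prodForgetComparison F).app TopCat.cantor) := by
  refine ⟨NatTrans.injective_app_of_jointlyInjective _
    (fun n => TopCat.ofHom (Y := TopCat.of (ULift Bool)) ⟨fun y => y n, continuous_apply n⟩)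
    (fun a b h => Prod.ext (congrArg Prod.fst (h 0) :)
      (funext fun n => (congrArg Prod.snd (h n) :)))
    (fun _ => (bijective_prodForgetComparison_app_of_discreteTopology F _).1),
    surjective_prodForgetComparison_app F _⟩

lemma injective_prodForgetComparison_app_indiscreteBool :
    Injective ((prodForgetComparison F).app TopCat.indiscreteBool) := by
  have : PreservesColimitsOfSize.{0, 0} F := preservesColimitsOfSize_shrink F
  refine ((isIso_iff_bijective _).1 <| NatTrans.isIso_app_coconePt_of_isIso_app _ _ _
    (TopCat.discreteKernelPair.isColimitCofork TopCat.isQuotientMap_infinitelyOften)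
    fun j => ?_).1
  cases j
  · exact (isIso_iff_bijective _).2
      (bijective_prodForgetComparison_app_of_discreteTopology F (TopCat.discrete.obj _))
  · exact (isIso_iff_bijective _).2 (bijective_prodForgetComparison_app_cantor F)

open Classical in
lemma injective_prodForgetComparison_app (T : TopCat.{u}) :
    Injective ((prodForgetComparison F).app T) := by
  refine NatTrans.injective_app_of_jointlyInjective _ (fun χ : T ⟶ TopCat.indiscreteBool => χ)
    (fun ⟨s, x⟩ ⟨s', x'⟩ h => ?_)
    (fun _ => injective_prodForgetComparison_app_indiscreteBool F)
  let χ : T ⟶ TopCat.indiscreteBool :=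
    TopCat.ofHom (Y := TopCat.trivial.obj _) ⟨fun t => ⟨decide (t = x)⟩, continuous_top⟩
  obtain ⟨hs, hx⟩ : s = s' ∧ χ x = χ x' := Prod.mk.inj (h χ)
  refine Prod.ext hs ?_
  have hx : decide (x = x) = decide (x' = x) := congrArg ULift.down hx
  simpa [eq_comm] using hx

instance isIso_prodForgetComparison : IsIso (prodForgetComparison F) :=
  have (T : TopCat.{u}) : IsIso ((prodForgetComparison F).app T) := (isIso_iff_bijective _).2
    ⟨injective_prodForgetComparison_app F T, surjective_prodForgetComparison_app F T⟩
  NatIso.isIso_of_isIso_app _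

end

theorem stmt6 (F : TopCat.{u} ⥤ Type u) [PreservesColimitsOfSize.{u, u} F] :
    Nonempty (F ≅ prodForget (F.obj (TopCat.of PUnit))) :=
  ⟨(asIso (prodForgetComparison F)).symm⟩
end

section
/- The assignment sending a set S to the functor T ↦ S × |T| (where |T| is the underlying set of the topological space T) defines a fully faithful functor from Type u to the functor category TopCat ⥤ Type u, whose essential image consists exactly of the functors preserving all small colimits. Hence the full subcategory of TopCat ⥤ Type u on the colimit-preserving functors is equivalent to the category Type u of sets. -/
/-!
STATEMENT 7: The assignment `S ↦ (T ↦ S × |T|)` is a fully faithful functor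
`Type u ⥤ (TopCat ⥤ Type u)` whose essential image consists exactly of the functors
preserving all small colimits; hence the full subcategory of colimit-preserving functors
`TopCat ⥤ Type u` is equivalent to `Type u`.
-/

open CategoryTheory CategoryTheory.Limits

universe u

/-- The functor `Type u ⥤ (TopCat ⥤ Type u)` sending `S` to `T ↦ S × |T|`. -/
def prodForgetFunctor : Type u ⥤ TopCat.{u} ⥤ Type u where
  obj := prodForget
  map g := { app := fun _ => TypeCat.ofHom fun p => (g p.1, p.2) }

/-!
Let `F` preserve small colimits and `S = F pt`. The points `pt ⟶ T` give a natural map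
`S × |T| → F T`. Both sides preserve colimits in `T` (the left one is `forget ⋙ (S ⊗ -)`, a
composite of left adjoints), so the spaces on which this map is bijective are closed under
colimits. They include the point, hence the discrete spaces, and the map is surjective everywhere
because `F` preserves the epimorphism from the discretisation of `T`.

Injectivity passes to any `T` whose points are separated by maps into spaces where it holds:
into the discrete `Bool` for totally separated spaces such as the convergent sequence `ℕ ∪ {∞}`,
whose quotient collapsing all terms to one point, a coequalizer, is the Sierpiński space; and into
the Sierpiński space for T₀ spaces. Finally every space is the wide pushout under its discretisation
of the T₀ spaces `nhdsAdjoint x (𝓝 x)`, in which `x` keeps its neighbourhoods and all other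
points are isolated.
-/

open MonoidalCategory Topology Filter Function

open scoped Classical in
lemma continuous_ite_of_specializes {Y : Type*} [TopologicalSpace Y] {a b : Y} (h : a ⤳ b) :
    Continuous fun p : Prop => if p then a else b := by
  refine continuous_iff_continuousAt.2 fun p => ?_
  by_cases hp : p
  · rw [ContinuousAt, eq_true hp, nhds_true]
    exact tendsto_pure_nhds _ _
  · rw [ContinuousAt, eq_false hp, nhds_false, tendsto_iff_forall_eventually_mem]
    intro U hU
    refine eventually_top.2 fun q => ?_
    by_cases hq : q
    · simpa [hq] using mem_of_mem_nhds (h (by simpa using hU))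
    · simpa [hq] using mem_of_mem_nhds (by simpa using hU)

open OnePoint in
lemma specializes_infty_of_comp_coe_eq_const {X Y : Type*} [TopologicalSpace X]
    [NoncompactSpace X] [TopologicalSpace Y] {f : OnePoint X → Y} (hf : Continuous f) {a : Y}
    (hconst : ∀ x : X, f x = a) : a ⤳ f ∞ := by
  rw [specializes_iff_mem_closure]
  refine map_mem_closure hf (denseRange_coe ∞) ?_
  rintro _ ⟨x, rfl⟩
  exact hconst x

instance : NoncompactSpace (ULift.{u} ℕ) :=
  Homeomorph.ulift.symm.isClosedEmbedding.noncompactSpace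

namespace ProdForget

abbrev point : TopCat.{u} := TopCat.of PUnit

def pointTo {T : TopCat.{u}} (t : T) : point ⟶ T := TopCat.ofHom (ContinuousMap.const _ t)

def toPoint (T : TopCat.{u}) : T ⟶ point := TopCat.ofHom (ContinuousMap.const _ PUnit.unit)

lemma pointTo_comp {T W : TopCat.{u}} (t : T) (h : T ⟶ W) : pointTo t ≫ h = pointTo (h t) := rfl

lemma pointTo_unit : pointTo (T := point.{u}) PUnit.unit = 𝟙 point := rfl

def isColimitCofanPointTo (X : TopCat.{u}) [DiscreteTopology X] :
    IsColimit (Cofan.mk X fun x : X => pointTo x) :=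
  Cofan.IsColimit.mk _
    (fun c => TopCat.ofHom ⟨fun x => c.inj x PUnit.unit, continuous_of_discreteTopology⟩)
    (fun _ _ => rfl)
    (fun c m hm => by
      ext x
      exact ConcreteCategory.congr_hom (hm x) PUnit.unit)

def ofDiscretization (T : TopCat.{u}) : TopCat.discrete.obj T ⟶ T :=
  TopCat.ofHom (X := TopCat.discrete.obj T) ⟨id, continuous_of_discreteTopology⟩

section Sierpinski

open OnePoint

abbrev convergentSeq : TopCat.{u} := TopCat.of (OnePoint (ULift.{u} ℕ))

abbrev sierpinski : TopCat.{u} := TopCat.of (ULift.{u} Prop)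

def seqTerm : TopCat.of (ULift.{u} ℕ) ⟶ convergentSeq :=
  TopCat.ofHom ⟨(↑), continuous_coe⟩

def seqFirstTerm : TopCat.of (ULift.{u} ℕ) ⟶ convergentSeq :=
  TopCat.ofHom (ContinuousMap.const _ (OnePoint.some ⟨0⟩))

def collapseTerms : convergentSeq.{u} ⟶ sierpinski :=
  TopCat.ofHom ⟨fun x => ULift.up (x ≠ ∞),
    continuous_uliftUp.comp (continuous_Prop.2 isOpen_compl_singleton)⟩

lemma seqTerm_comp_collapseTerms :
    seqTerm ≫ collapseTerms = seqFirstTerm.{u} ≫ collapseTerms := by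
  ext n
  simp [seqTerm, seqFirstTerm, collapseTerms]

lemma epi_collapseTerms : Epi collapseTerms.{u} :=
  (TopCat.epi_iff_surjective _).2 fun ⟨p⟩ => by
    by_cases hp : p
    · exact ⟨OnePoint.some ⟨0⟩, by simp [collapseTerms, hp]⟩
    · exact ⟨∞, by simp [collapseTerms, hp]⟩

noncomputable def isColimitCollapseTerms :
    IsColimit (Cofork.ofπ collapseTerms.{u} seqTerm_comp_collapseTerms) := by
  classical
  have hπ (s : Cofork seqTerm.{u} seqFirstTerm) (n : ULift.{u} ℕ) :
      s.π n = s.π (OnePoint.some ⟨0⟩) :=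
    ConcreteCategory.congr_hom s.condition n
  let desc (s : Cofork seqTerm.{u} seqFirstTerm) : sierpinski ⟶ s.pt :=
    TopCat.ofHom ⟨(fun q => if q then s.π (OnePoint.some ⟨0⟩) else s.π ∞) ∘ ULift.down,
      (continuous_ite_of_specializes
        (specializes_infty_of_comp_coe_eq_const s.π.hom.continuous (hπ s))).comp
        continuous_uliftDown⟩
  have fac (s : Cofork seqTerm.{u} seqFirstTerm) : collapseTerms ≫ desc s = s.π := by
    ext x
    induction x using OnePoint.rec <;> simp [desc, collapseTerms, hπ]
  have := epi_collapseTerms.{u}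
  exact Cofork.IsColimit.mk _ desc fac fun s m hm =>
    (cancel_epi collapseTerms).1 (hm.trans (fac s).symm)

end Sierpinski

section NhdsAdjoint

def nhdsAdjointSpace (T : TopCat.{u}) (x : T) : TopCat.{u} := @TopCat.of T (nhdsAdjoint x (𝓝 x))

instance (T : TopCat.{u}) (x : T) : T0Space (nhdsAdjointSpace T x) := by
  refine (t0Space_iff_exists_isOpen_xor_mem _).2 fun y z hyz => ?_
  by_cases hy : y = x
  · exact ⟨{z}, isOpen_singleton_nhdsAdjoint _ (hy ▸ hyz.symm), by simp [hyz]⟩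
  · exact ⟨{y}, isOpen_singleton_nhdsAdjoint _ hy, by simp [hyz.symm]⟩

def toNhdsAdjointSpace (T : TopCat.{u}) (x : T) :
    TopCat.discrete.obj T ⟶ nhdsAdjointSpace T x :=
  TopCat.ofHom (X := TopCat.discrete.obj T) (Y := nhdsAdjointSpace T x)
    ⟨id, continuous_of_discreteTopology⟩

def fromNhdsAdjointSpace (T : TopCat.{u}) (x : T) : nhdsAdjointSpace T x ⟶ T :=
  TopCat.ofHom (X := nhdsAdjointSpace T x) ⟨id, continuous_nhdsAdjoint_dom.2 tendsto_id⟩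

abbrev nhdsAdjointSpan (T : TopCat.{u}) : WidePushoutShape T ⥤ TopCat.{u} :=
  WidePushoutShape.wideSpan (TopCat.discrete.obj T) (nhdsAdjointSpace T) (toNhdsAdjointSpace T)

def nhdsAdjointCocone (T : TopCat.{u}) : Cocone (nhdsAdjointSpan T) :=
  WidePushoutShape.mkCocone (ofDiscretization T) (fromNhdsAdjointSpace T) fun _ => rfl

lemma nhdsAdjointSpan_cocone_leg_eq {T : TopCat.{u}} (s : Cocone (nhdsAdjointSpan T)) (x : T) :
    ⇑(s.ι.app (some x)) = ⇑(s.ι.app none) :=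
  funext (ConcreteCategory.congr_hom (s.w (WidePushoutShape.Hom.init x)))

def isColimitNhdsAdjointCocone (T : TopCat.{u}) : IsColimit (nhdsAdjointCocone T) where
  desc s := TopCat.ofHom ⟨s.ι.app none, continuous_iff_continuousAt.2 fun x => by
    have h : Continuous[nhdsAdjoint x (𝓝 x), _] (s.ι.app (some x) : T → s.pt) :=
      (s.ι.app (some x)).hom.continuous
    rw [nhdsAdjointSpan_cocone_leg_eq] at h
    exact continuous_nhdsAdjoint_dom.1 h⟩
  fac s := by
    rintro (_ | x)
    · rfl
    · ext t
      exact congrFun (nhdsAdjointSpan_cocone_leg_eq s x).symm t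
  uniq s m hm := by
    ext t
    exact ConcreteCategory.congr_hom (hm none) t

end NhdsAdjoint

def isoForgetCompTensorLeft (S : Type u) : prodForget S ≅ forget TopCat ⋙ tensorLeft S :=
  NatIso.ofComponents (fun _ => Iso.refl _) (fun _ => rfl)

instance preservesColimitsOfSize (S : Type u) : PreservesColimitsOfSize.{w, v} (prodForget S) :=
  preservesColimits_of_natIso (isoForgetCompTensorLeft S).symm

section EvalPoints

variable (F : TopCat.{u} ⥤ Type u)

def evalPoints : prodForget (F.obj point) ⟶ F where
  app T := TypeCat.ofHom fun p => F.map (pointTo p.2) p.1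
  naturality T W h := by
    ext ⟨s, t⟩
    change F.map (pointTo (h t)) s = F.map h (F.map (pointTo t) s)
    rw [← pointTo_comp, F.map_comp]
    rfl

lemma evalPoints_app_apply (T : TopCat.{u}) (p : F.obj point × T) :
    (evalPoints F).app T p = F.map (pointTo p.2) p.1 := rfl

lemma map_evalPoints_app {T W : TopCat.{u}} (h : T ⟶ W) (p : F.obj point × T) :
    F.map h ((evalPoints F).app T p) = (evalPoints F).app W (p.1, h p.2) :=
  ConcreteCategory.congr_hom ((evalPoints F).naturality h).symm p

lemma evalPoints_app_point_bijective : Bijective ((evalPoints F).app point) := by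
  have h (s : F.obj point) (x : PUnit) : (evalPoints F).app point (s, x) = s := by
    rw [evalPoints_app_apply, pointTo_unit, F.map_id]
    rfl
  refine ⟨fun ⟨s, x⟩ ⟨s', x'⟩ hss' => ?_, fun s => ⟨(s, PUnit.unit), h _ _⟩⟩
  rw [h, h] at hss'
  rw [hss']

lemma evalPoints_app_injective_of_separating {T : TopCat.{u}}
    (hsep : ∀ y z : T, y ≠ z → ∃ (W : TopCat.{u}) (h : T ⟶ W),
      Injective ((evalPoints F).app W) ∧ h y ≠ h z) :
    Injective ((evalPoints F).app T) := by
  rintro ⟨s, y⟩ ⟨s', z⟩ he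
  have hs : s = s' := by
    have := congrArg (F.map (toPoint T)) he
    rw [map_evalPoints_app, map_evalPoints_app] at this
    exact congrArg Prod.fst ((evalPoints_app_point_bijective F).1 this)
  have hyz : y = z := by
    by_contra hne
    obtain ⟨W, h, hW, hne'⟩ := hsep y z hne
    have := congrArg (F.map h) he
    rw [map_evalPoints_app, map_evalPoints_app] at this
    exact hne' (congrArg Prod.snd (hW this))
  rw [hs, hyz]

lemma evalPoints_app_bijective_of_isColimit {J : Type v} [Category.{w} J] {K : J ⥤ TopCat.{u}}
    [PreservesColimit K F] {c : Cocone K} (hc : IsColimit c)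
    (hK : ∀ j, Bijective ((evalPoints F).app (K.obj j))) :
    Bijective ((evalPoints F).app c.pt) := by
  simp only [← isIso_iff_bijective] at hK ⊢
  have : ∀ j, IsIso ((Functor.whiskerLeft K (evalPoints F)).app j) := hK
  have : IsIso (Functor.whiskerLeft K (evalPoints F)) := NatIso.isIso_of_isIso_app _
  exact isIso_app_coconePt_of_preservesColimit K _ c hc

end EvalPoints

section Cocontinuous

variable (F : TopCat.{u} ⥤ Type u) [PreservesColimitsOfSize.{u, u} F]

lemma evalPoints_app_bijective_of_discreteTopology (X : TopCat.{u}) [DiscreteTopology X] :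
    Bijective ((evalPoints F).app X) :=
  evalPoints_app_bijective_of_isColimit F (isColimitCofanPointTo X) fun _ =>
    evalPoints_app_point_bijective F

lemma evalPoints_app_surjective (T : TopCat.{u}) : Surjective ((evalPoints F).app T) := by
  have : PreservesColimitsOfSize.{0, 0} F := preservesColimitsOfSize_shrink F
  have : Epi (ofDiscretization T) := (TopCat.epi_iff_surjective _).2 fun t => ⟨t, rfl⟩
  have hmap : Surjective (F.map (ofDiscretization T)) := (epi_iff_surjective _).1 inferInstance
  intro a
  obtain ⟨b, rfl⟩ := hmap a
  obtain ⟨p, rfl⟩ := (evalPoints_app_bijective_of_discreteTopology F _).2 b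
  exact ⟨_, (map_evalPoints_app F _ p).symm⟩

lemma evalPoints_app_injective_of_totallySeparatedSpace (T : TopCat.{u})
    [TotallySeparatedSpace T] : Injective ((evalPoints F).app T) := by
  refine evalPoints_app_injective_of_separating F fun y z hyz => ?_
  obtain ⟨U, hU, hyU, hzU⟩ := exists_isClopen_of_totally_separated hyz
  refine ⟨TopCat.of (ULift.{u} Bool),
    TopCat.ofHom ⟨ULift.up ∘ U.boolIndicator,
      continuous_uliftUp.comp ((continuous_boolIndicator_iff_isClopen U).2 hU)⟩,
    (evalPoints_app_bijective_of_discreteTopology F _).1, ?_⟩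
  simp [Set.boolIndicator, hyU, Set.notMem_of_mem_compl hzU]

lemma evalPoints_app_sierpinski_bijective : Bijective ((evalPoints F).app sierpinski) := by
  have : PreservesColimitsOfSize.{0, 0} F := preservesColimitsOfSize_shrink F
  refine evalPoints_app_bijective_of_isColimit F isColimitCollapseTerms ?_
  rintro (_ | _)
  · exact evalPoints_app_bijective_of_discreteTopology F (TopCat.of (ULift ℕ))
  · exact ⟨evalPoints_app_injective_of_totallySeparatedSpace F convergentSeq,
      evalPoints_app_surjective F _⟩

lemma evalPoints_app_injective_of_t0Space (T : TopCat.{u}) [T0Space T] :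
    Injective ((evalPoints F).app T) := by
  refine evalPoints_app_injective_of_separating F fun y z hyz => ?_
  obtain ⟨U, hU, hyzU⟩ := (t0Space_iff_exists_isOpen_xor_mem T).1 ‹_› hyz
  refine ⟨sierpinski, TopCat.ofHom ⟨fun t => ULift.up (t ∈ U),
    continuous_uliftUp.comp (continuous_Prop.2 hU)⟩,
    (evalPoints_app_sierpinski_bijective F).1, fun h => ?_⟩
  have : (y ∈ U) = (z ∈ U) := congrArg ULift.down h
  simp_all

lemma evalPoints_app_bijective (T : TopCat.{u}) : Bijective ((evalPoints F).app T) := by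
  refine evalPoints_app_bijective_of_isColimit F (isColimitNhdsAdjointCocone T) ?_
  rintro (_ | x)
  · exact evalPoints_app_bijective_of_discreteTopology F (TopCat.discrete.obj T)
  · exact ⟨evalPoints_app_injective_of_t0Space F (nhdsAdjointSpace T x),
      evalPoints_app_surjective F _⟩

instance isIso_evalPoints : IsIso (evalPoints F) := by
  have (T : TopCat.{u}) : IsIso ((evalPoints F).app T) :=
    (isIso_iff_bijective _).2 (evalPoints_app_bijective F T)
  exact NatIso.isIso_of_isIso_app _

end Cocontinuous

theorem essImage_prodForgetFunctor_iff (F : TopCat.{u} ⥤ Type u) :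
    prodForgetFunctor.essImage F ↔ Nonempty (PreservesColimitsOfSize.{u, u} F) := by
  refine ⟨fun ⟨S, ⟨e⟩⟩ => ⟨preservesColimits_of_natIso (F := prodForget S) e⟩, ?_⟩
  rintro ⟨_⟩
  exact ⟨F.obj point, ⟨(asIso (evalPoints F) : prodForget _ ≅ F)⟩⟩

instance : prodForgetFunctor.{u}.Faithful where
  map_injective {S _} g g' h := by
    ext s
    exact congrArg Prod.fst
      (ConcreteCategory.congr_hom (NatTrans.congr_app h point) ((s, PUnit.unit) : S × PUnit))

instance : prodForgetFunctor.{u}.Full where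
  map_surjective {S S'} η := by
    refine ⟨TypeCat.ofHom fun s => (η.app point (s, PUnit.unit)).1, ?_⟩
    ext T ⟨s, t⟩
    exact (ConcreteCategory.congr_hom (η.naturality (pointTo t))
      ((s, PUnit.unit) : S × PUnit)).symm

end ProdForget

theorem stmt7 :
    prodForgetFunctor.{u}.Full ∧ prodForgetFunctor.{u}.Faithful ∧
      (∀ F : TopCat.{u} ⥤ Type u,
        prodForgetFunctor.{u}.essImage F ↔
          Nonempty (PreservesColimitsOfSize.{u, u} F)) ∧
      Nonempty ((ObjectProperty.FullSubcategory fun F : TopCat.{u} ⥤ Type u =>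
        Nonempty (PreservesColimitsOfSize.{u, u} F)) ≌ Type u) := by
  have hP : (fun F : TopCat.{u} ⥤ Type u => Nonempty (PreservesColimitsOfSize.{u, u} F)) =
      prodForgetFunctor.essImage :=
    funext fun F => propext (ProdForget.essImage_prodForgetFunctor_iff F).symm
  refine ⟨inferInstance, inferInstance, ProdForget.essImage_prodForgetFunctor_iff, ?_⟩
  rw [hP]
  exact ⟨prodForgetFunctor.toEssImage.asEquivalence.symm⟩
end

section
/- Let F : TopCat ⥤ Type u be a functor preserving all small colimits, and let f : X ⟶ Y be a continuous map whose underlying function is bijective. Then F.map f is a bijection (an isomorphism in Type u). Consequently, the category of topological spaces cannot be recovered from its cocontinuous Set-valued functors: they are not jointly conservative. -/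
/-!
A continuous bijection `X → Y` is the identity `(α, σ) → (α, τ)` of a finer to a coarser topology
followed by a homeomorphism, and `F` preserves epimorphisms (cokernel pairs), so it suffices to
show that `F` is injective on `(α, σ) → (α, τ)`.

On `α ⊕ (α × α × ℕ)` we build an increasing chain of topologies. A satellite point `(y, v, k)`
converges to the core point `y` as `v → y` in `τ` and `k → ∞`, and from stage `k + 1` on it is
topologically indistinguishable from the core point `v`. In the colimit an open set around the
core point `y` therefore contains a `τ`-neighbourhood of `y`, so `(α, σ) → colim` factors through
`(α, τ)`; yet at every finite stage `(α, σ)` is a retract. As `F` commutes with this filtered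
colimit, `F (α, σ) → F colim` is injective, and hence so is `F (α, σ) → F (α, τ)`.
-/

open CategoryTheory CategoryTheory.Limits Topology Filter

universe u

theorem injective_map_comp_ι_of_isSplitMono {C J : Type*} [Category C] [Category J]
    [IsFiltered J] (F : C ⥤ Type u) {D : J ⥤ C} {c : Cocone D}
    (hc : IsColimit c) [PreservesColimit D F] {X : C} {j : J} (i : X ⟶ D.obj j)
    (hi : ∀ (k : J) (g : j ⟶ k), IsSplitMono (i ≫ D.map g)) :
    Function.Injective (F.map (i ≫ c.ι.app j)) := by
  intro a b hab
  rw [F.map_comp, types_comp_apply, types_comp_apply] at hab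
  obtain ⟨k, g, hg⟩ :=
    (Types.FilteredColimit.isColimit_eq_iff' (isColimitOfPreserves F hc) _ _).mp hab
  have : IsSplitMono (i ≫ D.map g) := hi k g
  apply (mono_iff_injective (F.map (i ≫ D.map g))).mp inferInstance
  rw [F.map_comp, types_comp_apply, types_comp_apply]
  exact hg

namespace Satellite

variable {α : Type u}

abbrev Carrier (α : Type u) : Type u := α ⊕ (α × α × ℕ)

@[reducible]
def base (σ τ : TopologicalSpace α) : TopologicalSpace (Carrier α) :=
  TopologicalSpace.coinduced Sum.inl σ ⊔
    ⨆ y, nhdsAdjoint (Sum.inl y)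
      (map (fun p : α × ℕ => Sum.inr (y, p)) (@nhds α τ y ×ˢ atTop))

def collapse (n : ℕ) : Carrier α → Carrier α :=
  Sum.elim Sum.inl fun s => if s.2.2 < n then Sum.inl s.2.1 else Sum.inr s

-- The open sets are the `base`-open unions of fibres of `collapse n`.
@[reducible]
def stage (σ τ : TopologicalSpace α) (n : ℕ) : TopologicalSpace (Carrier α) :=
  base σ τ ⊔ TopologicalSpace.induced (collapse n) ⊥

def retraction (n : ℕ) : Carrier α → α :=
  Sum.elim id Prod.fst ∘ collapse n

variable (σ τ : TopologicalSpace α)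

theorem isOpen_base_iff (W : Set (Carrier α)) :
    IsOpen[base σ τ] W ↔ IsOpen[σ] (Sum.inl ⁻¹' W) ∧
      ∀ y, Sum.inl y ∈ W → ∀ᶠ p in @nhds α τ y ×ˢ atTop, Sum.inr (y, p) ∈ W := by
  refine isOpen_sup.trans (and_congr isOpen_coinduced ?_)
  rw [isOpen_iSup_iff]
  rfl

theorem mem_iff_of_collapse_eq {n : ℕ} {W : Set (Carrier α)} (hW : IsOpen[stage σ τ n] W)
    {a b : Carrier α} (h : collapse n a = collapse n b) : a ∈ W ↔ b ∈ W := by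
  obtain ⟨t, -, rfl⟩ := (isOpen_sup.mp hW).2
  simp only [Set.mem_preimage, h]

theorem collapse_comp_collapse_of_le {n m : ℕ} (h : n ≤ m) :
    collapse m ∘ collapse n = collapse (α := α) m := by
  funext a
  rcases a with x | ⟨y, v, k⟩
  · rfl
  by_cases hk : k < n
  · simp [collapse, hk, hk.trans_le h]
  · simp [collapse, hk]

theorem stage_mono : Monotone (stage σ τ) := fun n m h => by
  refine sup_le_sup_left ?_ _
  rw [← collapse_comp_collapse_of_le h, ← induced_compose]
  exact induced_mono bot_le

theorem base_le_stage (n : ℕ) : base σ τ ≤ stage σ τ n := le_sup_left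

theorem continuous_inl_stage (n : ℕ) : Continuous[σ, stage σ τ n] Sum.inl :=
  continuous_le_rng (base_le_stage σ τ n)
    (continuous_iff_coinduced_le.mpr (le_sup_left (b := ⨆ _, _)))

theorem continuous_retraction (n : ℕ) : Continuous[stage σ τ n, σ] (retraction n) := by
  have hsat : Continuous[.induced (collapse n) ⊥, σ] (retraction n) := by
    rw [continuous_iff_le_induced, retraction, ← induced_compose]
    exact induced_mono bot_le
  have hbase : Continuous[base σ τ, σ] (retraction n) := by
    rw [continuous_def]
    intro U hU
    refine (isOpen_base_iff σ τ _).mpr ⟨hU, fun y hy => ?_⟩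
    filter_upwards [(eventually_ge_atTop n).prod_inr (@nhds α τ y)] with p hp
    simpa [retraction, collapse, not_lt.mpr hp] using hy
  exact continuous_sup_dom.mpr ⟨hbase, hsat⟩

theorem isOpen_preimage_inl_of_forall_isOpen_stage {W : Set (Carrier α)}
    (hW : ∀ n, IsOpen[stage σ τ n] W) : IsOpen[τ] (Sum.inl ⁻¹' W) := by
  let := τ
  refine isOpen_iff_mem_nhds.mpr fun x hx => ?_
  have hnear := ((isOpen_base_iff σ τ W).mp (base_le_stage σ τ 0 W (hW 0))).2 x hx
  filter_upwards [hnear.curry] with v hv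
  obtain ⟨k, hk⟩ := hv.exists
  exact (mem_iff_of_collapse_eq σ τ (hW (k + 1)) (a := Sum.inr (x, v, k)) (b := Sum.inl v)
    (by simp [collapse])).mp hk

end Satellite

namespace TopCat

variable {β : Type u}

def ofLE {t t' : TopologicalSpace β} (h : t ≤ t') : @TopCat.of β t ⟶ @TopCat.of β t' :=
  @ofHom β β t t' (@ContinuousMap.mk β β t t' id (continuous_id_iff_le.mpr h))

def ofMonotone {J : Type*} [Preorder J] {t : J → TopologicalSpace β} (ht : Monotone t) :
    J ⥤ TopCat.{u} where
  obj j := @TopCat.of β (t j)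
  map g := ofLE (ht (leOfHom g))
  map_id _ := rfl
  map_comp _ _ := rfl

theorem ofMonotone_ι_app_apply {J : Type*} [Preorder J] {t : J → TopologicalSpace β}
    (ht : Monotone t) (c : Cocone (ofMonotone ht)) {i j : J} (h : i ≤ j) (x : β) :
    c.ι.app j x = c.ι.app i x :=
  ConcreteCategory.congr_hom (c.w (homOfLE h)) x

theorem isOpen_iff_of_isColimit_ofMonotone {J : Type*} [Preorder J] [OrderBot J]
    {t : J → TopologicalSpace β} (ht : Monotone t) {c : Cocone (ofMonotone ht)}
    (hc : IsColimit c) (U : Set c.pt) : IsOpen U ↔ ∀ j, IsOpen[t j] (c.ι.app ⊥ ⁻¹' U) := by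
  rw [isOpen_iff_of_isColimit c hc]
  refine forall_congr' fun j => ?_
  rw [show ⇑(c.ι.app j) = ⇑(c.ι.app ⊥) from funext (ofMonotone_ι_app_apply ht c bot_le)]
  rfl

end TopCat

open Satellite in
theorem injective_map_ofLE (F : TopCat.{u} ⥤ Type u) [PreservesColimitsOfShape ℕ F]
    {α : Type u} {σ τ : TopologicalSpace α} (h : σ ≤ τ) :
    Function.Injective (F.map (TopCat.ofLE h)) := by
  let D := TopCat.ofMonotone (stage_mono σ τ)
  let c := colimit.cocone D
  let i : @TopCat.of α σ ⟶ D.obj 0 := @TopCat.ofHom _ _ σ (stage σ τ 0)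
    (@ContinuousMap.mk _ _ σ (stage σ τ 0) _ (continuous_inl_stage σ τ 0))
  let j : @TopCat.of α τ ⟶ c.pt := @TopCat.ofHom _ _ τ _
    (@ContinuousMap.mk _ _ τ _ (fun x => c.ι.app 0 (Sum.inl x)) (by
    rw [continuous_def]
    intro U hU
    exact isOpen_preimage_inl_of_forall_isOpen_stage σ τ
      ((TopCat.isOpen_iff_of_isColimit_ofMonotone _ (colimit.isColimit D) U).mp hU)))
  have hfac : i ≫ c.ι.app 0 = TopCat.ofLE h ≫ j := rfl
  have hi : ∀ k (g : 0 ⟶ k), IsSplitMono (i ≫ D.map g) := fun k g =>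
    ⟨⟨⟨@TopCat.ofHom _ _ (stage σ τ k) σ
      (@ContinuousMap.mk _ _ (stage σ τ k) σ _ (continuous_retraction σ τ k)), rfl⟩⟩⟩
  have := injective_map_comp_ι_of_isSplitMono F (colimit.isColimit D) i hi
  rw [hfac, F.map_comp, types_comp] at this
  exact this.of_comp

theorem injective_map_of_bijective (F : TopCat.{u} ⥤ Type u) [PreservesColimitsOfShape ℕ F]
    {X Y : TopCat.{u}} (f : X ⟶ Y) (hf : Function.Bijective f) :
    Function.Injective (F.map f) := by
  have hle : X.str ≤ Y.str.induced f := continuous_iff_le_induced.mp f.hom.continuous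
  let τ : TopologicalSpace X := Y.str.induced f
  let g : @TopCat.of X τ ⟶ Y :=
    @TopCat.ofHom X Y τ _ (@ContinuousMap.mk X Y τ _ f (continuous_induced_dom (t := Y.str)))
  have hrange : IsOpen (Set.range g) := by
    change IsOpen (Set.range f)
    rw [hf.2.range_eq]
    exact isOpen_univ
  have : IsIso g := TopCat.isIso_of_bijective_of_isOpenMap g hf (IsInducing.isOpenMap ⟨rfl⟩ hrange)
  have hfac : f = TopCat.ofLE hle ≫ g := rfl
  rw [hfac, F.map_comp, types_comp]
  exact ((isIso_iff_bijective _).mp inferInstance).injective.comp (injective_map_ofLE F hle)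

theorem surjective_map_of_surjective (F : TopCat.{u} ⥤ Type u)
    [PreservesColimitsOfShape WalkingSpan F] {X Y : TopCat.{u}} (f : X ⟶ Y)
    (hf : Function.Surjective f) : Function.Surjective (F.map f) := by
  have : Epi f := (TopCat.epi_iff_surjective f).mpr hf
  exact (epi_iff_surjective (F.map f)).mp inferInstance

theorem stmt8 (F : TopCat.{u} ⥤ Type u) [PreservesColimitsOfSize.{u, u} F]
    {X Y : TopCat.{u}} (f : X ⟶ Y) (hf : Function.Bijective f) :
    Function.Bijective (F.map f) := by
  have : PreservesColimitsOfSize.{0, 0} F := preservesColimitsOfSize_shrink.{0, u, 0, u} F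
  exact ⟨injective_map_of_bijective F f hf, surjective_map_of_surjective F f hf.2⟩
end

section
/- Let F : Type u ⥤ TopCat be a functor preserving all small limits such that the composite of F with the forgetful functor TopCat ⥤ Type u is naturally isomorphic to the identity functor of Type u. Then F is naturally isomorphic to the functor equipping each set with the indiscrete (trivial) topology; equivalently, for every set X the space F(X) carries the indiscrete topology. -/
/-!
Transporting a function `F X → F Y` along `e` exhibits it as the underlying function of a
morphism `F.map g`, so every function between the spaces `F X` is continuous. A space on which
every self-map is continuous is discrete as soon as its topology is not indiscrete. Since `F`
preserves products, `F (ℕ → X)` is homeomorphic to the product space `ℕ → F X`; if `F X` were not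
indiscrete, this product would be discrete, which an infinite product of spaces with at least two
points never is.
-/

open Topology CategoryTheory CategoryTheory.Limits

universe u

section Topology

variable {X : Type*} [TopologicalSpace X]

theorem NontrivialTopology.exists_isOpen_mem_notMem [h : NontrivialTopology X] :
    ∃ U : Set X, IsOpen U ∧ ∃ a ∈ U, ∃ b, b ∉ U := by
  obtain ⟨x, y, hxy⟩ := h.exists_not_inseparable
  obtain ⟨U, hU, hx | hy⟩ := not_inseparable_iff_exists_open.mp hxy
  · exact ⟨U, hU, x, hx.1, y, hx.2⟩
  · exact ⟨U, hU, y, hy.1, x, hy.2⟩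

theorem DiscreteTopology.of_forall_continuous [NontrivialTopology X]
    (h : ∀ f : X → X, Continuous f) : DiscreteTopology X := by
  classical
  obtain ⟨U, hU, a, ha, b, hb⟩ := NontrivialTopology.exists_isOpen_mem_notMem (X := X)
  refine discreteTopology_iff_isOpen_singleton.mpr fun x => ?_
  have hx : {x} = (fun y => if y = x then a else b) ⁻¹' U := by
    ext y
    by_cases hy : y = x <;> simp [hy, ha, hb]
  exact hx ▸ (h _).isOpen_preimage U hU

theorem Pi.not_discreteTopology {ι : Type*} [Infinite ι] {Y : ι → Type*}
    [∀ i, TopologicalSpace (Y i)] [∀ i, Nontrivial (Y i)] : ¬DiscreteTopology (∀ i, Y i) := by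
  classical
  intro _
  obtain ⟨y⟩ : Nonempty (∀ i, Y i) := inferInstance
  have hy : ({y} : Set (∀ i, Y i)) ∈ 𝓝 y := mem_nhds_discrete.mpr rfl
  rw [nhds_pi, Filter.mem_pi'] at hy
  obtain ⟨I, t, ht, hsub⟩ := hy
  obtain ⟨n, hn⟩ := Infinite.exists_notMem_finset I
  obtain ⟨z, hz⟩ := exists_ne (y n)
  have hupdate : Function.update y n z ∈ Set.pi I t := fun i hi => by
    rw [Function.update_of_ne (ne_of_mem_of_not_mem hi hn)]
    exact mem_of_mem_nhds (ht i)
  have hyn := congrFun (hsub hupdate) n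
  rw [Function.update_self] at hyn
  exact hz hyn

instance Pi.nontrivialTopology {ι : Type*} [Nonempty ι] (Y : Type*) [TopologicalSpace Y]
    [h : NontrivialTopology Y] : NontrivialTopology (ι → Y) := by
  obtain ⟨x, y, hxy⟩ := h.exists_not_inseparable
  inhabit ι
  exact .of_exists_not_inseparable
    ⟨fun _ => x, fun _ => y, fun h => hxy (inseparable_pi.mp h default)⟩

theorem IndiscreteTopology.of_forall_continuous_pi (ι : Type*) [Infinite ι] (Y : Type*)
    [TopologicalSpace Y] (h : ∀ f : (ι → Y) → ι → Y, Continuous f) : IndiscreteTopology Y := by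
  by_contra hY
  rw [TopologicalSpace.not_indiscrete_iff] at hY
  have := Nontrivial.of_nontrivialTopology (α := Y)
  exact Pi.not_discreteTopology (DiscreteTopology.of_forall_continuous h)

end Topology

section Functor

variable (F : Type u ⥤ TopCat.{u})

theorem continuous_of_comp_forget_iso_id (e : F ⋙ forget TopCat ≅ 𝟭 (Type u)) {X Y : Type u}
    (f : F.obj X → F.obj Y) : Continuous f := by
  let g : X → Y := fun x => e.hom.app Y (f (e.inv.app X x))
  have hf : f = F.map (TypeCat.ofHom g) := by
    funext a
    apply (e.app Y).toEquiv.injective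
    simpa [g] using (NatTrans.naturality_apply e.hom (TypeCat.ofHom g) a).symm
  rw [hf]
  exact (F.map _).hom.continuous

noncomputable def mapPiHomeomorph (ι X : Type u)
    [PreservesLimit (Discrete.functor fun _ : ι => X) F] : F.obj (ι → X) ≃ₜ (ι → F.obj X) :=
  TopCat.homeoOfIso (F.mapIso (Types.productIso fun _ : ι => X).symm ≪≫
    PreservesProduct.iso F _ ≪≫ TopCat.piIsoPi _)

theorem indiscreteTopology_obj [PreservesLimitsOfShape (Discrete (ULift.{u} ℕ)) F]
    (e : F ⋙ forget TopCat ≅ 𝟭 (Type u)) (X : Type u) : IndiscreteTopology (F.obj X) := by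
  let h := mapPiHomeomorph F (ULift ℕ) X
  refine .of_forall_continuous_pi (ULift ℕ) (F.obj X) fun f => ?_
  have hf : f = h ∘ (h.symm ∘ f ∘ h) ∘ h.symm := by
    funext q
    simp
  rw [hf]
  exact h.continuous.comp ((continuous_of_comp_forget_iso_id F e _).comp h.symm.continuous)

end Functor

theorem TopCat.isIso_adj₂_unit_app (A : TopCat.{u}) [IndiscreteTopology A] :
    IsIso (TopCat.adj₂.unit.app A) :=
  ⟨TopCat.ofHom (X := TopCat.trivial.obj A) (Y := A)
    ⟨id, continuous_id_iff_le.mpr (IndiscreteTopology.eq_top A).ge⟩, rfl, rfl⟩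

noncomputable def isoTrivialOfIndiscrete (F : Type u ⥤ TopCat.{u})
    (e : F ⋙ forget TopCat ≅ 𝟭 (Type u)) [∀ X, IndiscreteTopology (F.obj X)] :
    F ≅ TopCat.trivial :=
  have (X : Type u) : IsIso ((F.whiskerLeft TopCat.adj₂.unit).app X) :=
    TopCat.isIso_adj₂_unit_app (F.obj X)
  have : IsIso (F.whiskerLeft TopCat.adj₂.unit) := NatIso.isIso_of_isIso_app _
  asIso (F.whiskerLeft TopCat.adj₂.unit) ≪≫ Functor.isoWhiskerRight e TopCat.trivial

theorem stmt9 (F : Type u ⥤ TopCat.{u}) [PreservesLimitsOfSize.{u, u} F]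
    (e : F ⋙ forget TopCat ≅ 𝟭 (Type u)) :
    Nonempty (F ≅ TopCat.trivial.{u}) ∧
      ∀ X : Type u, (F.obj X).str = (⊤ : TopologicalSpace (F.obj X)) := by
  have := indiscreteTopology_obj F e
  exact ⟨⟨isoTrivialOfIndiscrete F e⟩, fun X => IndiscreteTopology.eq_top (F.obj X)⟩
end

section
/- Let P and Q be directed sets, let h : Q → P be a function, and consider the induced map Option.map h : Option Q → Option P, where Option Q and Option P carry the topologies in which a subset U is open if and only if, whenever none ∈ U, there exists p with some q ∈ U for all q ≥ p. Then Option.map h is continuous if and only if h is cofinal, i.e., Tendsto h atTop atTop (for every p ∈ P there exists q₀ ∈ Q with h q ≥ p for all q ≥ q₀). -/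
open Filter Topology Set

universe u v

/-- The space `P ∪ {∞}` associated to a directed set `P`. -/
def optionTopology (P : Type u) [Preorder P] [Nonempty P] [IsDirected P (· ≤ ·)] :
    TopologicalSpace (Option P) where
  IsOpen U := none ∈ U → ∃ p : P, ∀ q : P, p ≤ q → some q ∈ U
  isOpen_univ _ := ⟨Classical.arbitrary P, fun _ _ => Set.mem_univ _⟩
  isOpen_inter U V hU hV h := by
    obtain ⟨p, hp⟩ := hU h.1
    obtain ⟨p', hp'⟩ := hV h.2
    obtain ⟨r, hr, hr'⟩ := directed_of (· ≤ ·) p p'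
    exact ⟨r, fun q hq => ⟨hp q (hr.trans hq), hp' q (hr'.trans hq)⟩⟩
  isOpen_sUnion S hS h := by
    obtain ⟨t, htS, ht⟩ := h
    obtain ⟨p, hp⟩ := hS t htS ht
    exact ⟨p, fun q hq => ⟨t, htS, hp q hq⟩⟩

section OptionTopology

variable {P : Type*} [Preorder P] [Nonempty P] [IsDirected P (· ≤ ·)]

theorem isOpen_optionTopology_iff {U : Set (Option P)} :
    IsOpen[optionTopology P] U ↔ (none ∈ U → ∀ᶠ q in atTop, some q ∈ U) := by
  simp only [eventually_atTop]
  rfl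

theorem isOpen_optionTopology_insert_none_image_some_Ici (p : P) :
    IsOpen[optionTopology P] (insert none (some '' Ici p)) :=
  isOpen_optionTopology_iff.2 fun _ =>
    (eventually_ge_atTop p).mono fun _ hq => mem_insert_of_mem _ (mem_image_of_mem _ hq)

end OptionTopology

theorem stmt12 {P : Type u} [Preorder P] [Nonempty P] [IsDirected P (· ≤ ·)]
    {Q : Type v} [Preorder Q] [Nonempty Q] [IsDirected Q (· ≤ ·)]
    (h : Q → P) :
    @Continuous (Option Q) (Option P) (optionTopology Q) (optionTopology P)
        (Option.map h) ↔
      Tendsto h atTop atTop := by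
  rw [continuous_def]
  constructor
  · refine fun hc => tendsto_atTop.2 fun p => ?_
    have hpre := hc _ (isOpen_optionTopology_insert_none_image_some_Ici p)
    exact (isOpen_optionTopology_iff.1 hpre (mem_insert _ _)).mono fun q hq => by simpa using hq
  · exact fun ht U hU => isOpen_optionTopology_iff.2 fun hnone =>
      ht.eventually (isOpen_optionTopology_iff.1 hU hnone)
end

section
/- Let X and Y be types and let φ : Set Y → Set X be a function that preserves arbitrary unions (φ(⋃ i, s i) = ⋃ i, φ(s i) for every family s indexed by any type) and complements (φ(sᶜ) = (φ s)ᶜ for every s : Set Y). Then there exists a unique function g : X → Y such that φ(s) = g ⁻¹' s for all s : Set Y. -/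
/-!
Every set is the union of its singletons, so `φ` is determined by the sets `φ {y}`.
These cover `X`, since `φ univ = (φ ∅)ᶜ = univ`, and they are pairwise disjoint, since
`{y} ⊆ {y'}ᶜ` forces `φ {y} ⊆ (φ {y'})ᶜ` by monotonicity. Hence each `x` lies in exactly
one `φ {g x}`, and `φ s = ⋃ y ∈ s, φ {y} = g ⁻¹' s`.
-/

universe u v

section

variable {X : Type u} {Y : Type v} {φ : Set Y → Set X}

section iUnion

variable (hUnion : ∀ {ι : Type v} (s : ι → Set Y), φ (⋃ i, s i) = ⋃ i, φ (s i))
include hUnion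

theorem map_sUnion_of_map_iUnion (S : Set (Set Y)) : φ (⋃₀ S) = ⋃ s ∈ S, φ s := by
  rw [Set.sUnion_eq_iUnion, hUnion, Set.biUnion_eq_iUnion]

theorem map_empty_of_map_iUnion : φ ∅ = ∅ := by
  simpa using map_sUnion_of_map_iUnion hUnion ∅

theorem monotone_of_map_iUnion : Monotone φ := fun s t hst => by
  have h := map_sUnion_of_map_iUnion hUnion {s, t}
  rw [Set.sUnion_pair, Set.union_eq_self_of_subset_left hst, Set.biUnion_pair] at h
  exact h ▸ Set.subset_union_left

theorem map_eq_biUnion_map_singleton (s : Set Y) : φ s = ⋃ y ∈ s, φ {y} := by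
  conv_lhs => rw [← Set.biUnion_of_singleton s, Set.biUnion_eq_iUnion, hUnion]
  rw [Set.biUnion_eq_iUnion]

variable (hCompl : ∀ s : Set Y, φ sᶜ = (φ s)ᶜ)
include hCompl

theorem existsUnique_mem_map_singleton (x : X) : ∃! y, x ∈ φ {y} := by
  have hx : x ∈ φ Set.univ := by
    rw [← Set.compl_empty, hCompl, map_empty_of_map_iUnion hUnion, Set.compl_empty]
    trivial
  rw [map_eq_biUnion_map_singleton hUnion, Set.mem_iUnion₂] at hx
  obtain ⟨y, -, hy⟩ := hx
  refine ⟨y, hy, fun y' hy' => by_contra fun hne => ?_⟩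
  have hsub : ({y'} : Set Y) ⊆ {y}ᶜ := Set.singleton_subset_iff.2 hne
  have hy_compl : x ∈ φ {y}ᶜ := monotone_of_map_iUnion hUnion hsub hy'
  exact (hCompl _ ▸ hy_compl) hy

end iUnion

theorem eq_of_preimage_eq {g g' : X → Y} (h : ∀ s : Set Y, g ⁻¹' s = g' ⁻¹' s) : g = g' :=
  funext fun x => by simpa using congrArg (x ∈ ·) (h {g' x})

end

theorem stmt14 {X : Type u} {Y : Type v} (φ : Set Y → Set X)
    (hUnion : ∀ {ι : Type v} (s : ι → Set Y), φ (⋃ i, s i) = ⋃ i, φ (s i))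
    (hCompl : ∀ s : Set Y, φ sᶜ = (φ s)ᶜ) :
    ∃! g : X → Y, ∀ s : Set Y, φ s = g ⁻¹' s := by
  choose g hg hg_unique using existsUnique_mem_map_singleton hUnion hCompl
  have hφ : ∀ s, φ s = g ⁻¹' s := fun s => by
    ext x
    rw [map_eq_biUnion_map_singleton hUnion, Set.mem_iUnion₂, Set.mem_preimage]
    exact ⟨fun ⟨y, hys, hxy⟩ => hg_unique x y hxy ▸ hys, fun hgx => ⟨g x, hgx, hg x⟩⟩
  exact ⟨g, hφ, fun g' hg' => eq_of_preimage_eq fun s => (hg' s).symm.trans (hφ s)⟩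
end

section
/- Let L be a locally small category with hom-sets in Type u, together with a distinguished object X, such that for every type I : Type u the I-fold power X^I of X exists in L and every object of L is isomorphic to such a power. Let Mod(L) be the full subcategory of the functor category L ⥤ Type u consisting of the functors preserving all small products. Then the evaluation functor U : Mod(L) → Type u, M ↦ M(X), has a left adjoint F, and F sends a type I to the representable functor Hom(X^I, −); that is, there are bijections Hom_{Mod(L)}(Hom(X^I, −), M) ≅ (I → M(X)) natural in I and M. -/
/-!
A natural transformation out of a representable functor `Hom(P, −)` is determined by the image
of `𝟙 P` (Yoneda). For `P = X^I` and a model `M`, that image lies in `M(X^I) ≅ M(X)^I`, since `M`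
preserves products; so maps `Hom(X^I, −) ⟶ M` are exactly `I`-tuples in `M(X)`, naturally in `M`.
This natural bijection exhibits `I ↦ Hom(X^I, −)` as a left adjoint of evaluation at `X`.
-/

open CategoryTheory CategoryTheory.Limits

universe u v

/-- The category of models of an infinitary Lawvere theory: the full subcategory of
`L ⥤ Type u` on the functors preserving all small products. -/
abbrev LawvereModel (L : Type v) [Category.{u} L] : Type (max v (u + 1)) :=
  ObjectProperty.FullSubcategory fun M : L ⥤ Type u =>
    ∀ I : Type u, Nonempty (PreservesLimitsOfShape (Discrete I) M)

/-- Evaluation of models at the distinguished object `X`. -/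
def evalModel (L : Type v) [Category.{u} L] (X : L) : LawvereModel L ⥤ Type u :=
  ObjectProperty.ι _ ⋙ (evaluation L (Type u)).obj X

/-- The representable model `Hom(X^I, −)`. -/
noncomputable def freeModel (L : Type v) [Category.{u} L] (X : L)
    (hpow : ∀ I : Type u, HasProduct fun _ : I => X) (I : Type u) :
    LawvereModel L :=
  haveI := hpow I
  ⟨coyoneda.obj (Opposite.op (∏ᶜ fun _ : I => X)), fun _ => ⟨inferInstance⟩⟩

namespace CategoryTheory.Limits

variable {C : Type*} [Category.{u} C] {I : Type u} (f : I → C) [HasProduct f]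

noncomputable def coyonedaPiHomEquiv (F : C ⥤ Type u) [PreservesLimit (Discrete.functor f) F] :
    (coyoneda.obj (Opposite.op (∏ᶜ f)) ⟶ F) ≃ ∀ i, F.obj (f i) :=
  coyonedaEquiv.trans ((PreservesProduct.iso F f).toEquiv.trans (Types.productIso _).toEquiv)

theorem coyonedaPiHomEquiv_apply (F : C ⥤ Type u) [PreservesLimit (Discrete.functor f) F]
    (α : coyoneda.obj (Opposite.op (∏ᶜ f)) ⟶ F) (i : I) :
    coyonedaPiHomEquiv f F α i = α.app (f i) (Pi.π f i) := by
  simp only [coyonedaPiHomEquiv, Equiv.trans_apply, coyonedaEquiv_apply, Iso.toEquiv_apply,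
    PreservesProduct.iso_hom, Types.productIso_hom_comp_eval_apply, piComparison_comp_π_apply]
  rw [← NatTrans.naturality_apply]
  simp

end CategoryTheory.Limits

section LawvereModel

variable {L : Type v} [Category.{u} L] (X : L) (hpow : ∀ I : Type u, HasProduct fun _ : I => X)

noncomputable def freeModelHomEquiv (I : Type u) (M : LawvereModel L) :
    (freeModel L X hpow I ⟶ M) ≃ (I ⟶ (evalModel L X).obj M) :=
  haveI := hpow I
  haveI := (M.property I).some
  (ObjectProperty.fullyFaithfulι _).homEquiv.trans
    ((coyonedaPiHomEquiv _ M.obj).trans TypeCat.homEquiv.symm)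

theorem freeModelHomEquiv_apply (I : Type u) (M : LawvereModel L)
    (h : freeModel L X hpow I ⟶ M) (i : I) :
    letI := hpow I
    freeModelHomEquiv X hpow I M h i = h.hom.app X (Pi.π (fun _ : I => X) i) := by
  have := hpow I
  have := (M.property I).some
  exact coyonedaPiHomEquiv_apply (fun _ : I => X) M.obj h.hom i

theorem freeModelHomEquiv_comp (I : Type u) {M M' : LawvereModel L} (g : M ⟶ M')
    (h : freeModel L X hpow I ⟶ M) :
    freeModelHomEquiv X hpow I M' (h ≫ g) =
      freeModelHomEquiv X hpow I M h ≫ (evalModel L X).map g := by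
  ext i
  simp only [TypeCat.Fun.toFun_apply, types_comp_apply]
  rw [freeModelHomEquiv_apply, freeModelHomEquiv_apply]
  rfl

end LawvereModel

theorem stmt15_general {L : Type v} [Category.{u} L] (X : L)
    (hpow : ∀ I : Type u, HasProduct fun _ : I => X) :
    ∃ F : Type u ⥤ LawvereModel L,
      Nonempty (F ⊣ evalModel L X) ∧
        ∀ I : Type u, Nonempty (F.obj I ≅ freeModel L X hpow I) :=
  ⟨Adjunction.leftAdjointOfEquiv (freeModelHomEquiv X hpow) (freeModelHomEquiv_comp X hpow),
    ⟨Adjunction.adjunctionOfEquivLeft _ _⟩, fun _ => ⟨Iso.refl _⟩⟩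

theorem stmt15 {L : Type v} [Category.{u} L] (X : L)
    (hpow : ∀ I : Type u, HasProduct fun _ : I => X)
    (hgen : ∀ A : L, ∃ I : Type u,
      letI := hpow I; Nonempty (A ≅ ∏ᶜ fun _ : I => X)) :
    ∃ F : Type u ⥤ LawvereModel L,
      Nonempty (F ⊣ evalModel L X) ∧
        ∀ I : Type u, Nonempty (F.obj I ≅ freeModel L X hpow I) :=
  stmt15_general X hpow
end

section
/- Let A and B be locally small categories. Assume that every functor from A to any locally small category preserving all small colimits has a right adjoint (A is strongly compact), and that every functor from B to any locally small category preserving all small limits has a left adjoint (B^op is strongly compact). Then passing to adjoints yields an equivalence between the full subcategory of A ⥤ B on the functors preserving all small colimits and the opposite of the full subcategory of B ⥤ A on the functors preserving all small limits. -/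
/-!
Taking right adjoints is a contravariant functor from left adjoints to right adjoints: a natural
transformation `L₂ ⟶ L₁` corresponds to its conjugate `R₁ ⟶ R₂`, and conjugation is bijective
and compatible with identities and composition, so this functor is fully faithful. It is
essentially surjective because a right adjoint `G` is, up to isomorphism, the right adjoint of its
own left adjoint. The two strong compactness hypotheses say precisely that the colimit-preserving
functors `A ⥤ B` are the left adjoints and the limit-preserving functors `B ⥤ A` are the right
adjoints.
-/

open CategoryTheory CategoryTheory.Limits

universe u v₁ v₂ w w'

namespace CategoryTheory

variable (C : Type*) [Category* C] (D : Type*) [Category* D]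

abbrev LeftAdjoints := ObjectProperty.FullSubcategory fun F : C ⥤ D => F.IsLeftAdjoint

abbrev RightAdjoints := ObjectProperty.FullSubcategory fun G : D ⥤ C => G.IsRightAdjoint

variable {C D}

instance (F : LeftAdjoints C D) : F.obj.IsLeftAdjoint := F.property

instance (G : RightAdjoints C D) : G.obj.IsRightAdjoint := G.property

namespace LeftAdjoints

noncomputable def rightAdjointFunctor : LeftAdjoints C D ⥤ (RightAdjoints C D)ᵒᵖ where
  obj F := .op ⟨F.obj.rightAdjoint, inferInstance⟩
  map {F F'} η := (ObjectProperty.homMk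
    (conjugateEquiv (.ofIsLeftAdjoint F'.obj) (.ofIsLeftAdjoint F.obj) η.hom)).op
  map_id F := by
    exact congrArg Quiver.Hom.op (ObjectProperty.hom_ext _
      (conjugateEquiv_id (.ofIsLeftAdjoint F.obj)))
  map_comp {F F' F''} η θ := by
    exact congrArg Quiver.Hom.op (ObjectProperty.hom_ext _
      (conjugateEquiv_comp (.ofIsLeftAdjoint F''.obj) (.ofIsLeftAdjoint F'.obj)
        (.ofIsLeftAdjoint F.obj) θ.hom η.hom).symm)

instance : (rightAdjointFunctor (C := C) (D := D)).Faithful where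
  map_injective h := ObjectProperty.hom_ext _
    ((conjugateEquiv _ _).injective (congrArg (fun φ => φ.unop.hom) h))

instance : (rightAdjointFunctor (C := C) (D := D)).Full where
  map_surjective φ :=
    ⟨ObjectProperty.homMk ((conjugateEquiv _ _).symm φ.unop.hom),
      congrArg Quiver.Hom.op (ObjectProperty.hom_ext _ (Equiv.apply_symm_apply _ _))⟩

instance : (rightAdjointFunctor (C := C) (D := D)).EssSurj where
  mem_essImage G :=
    ⟨⟨G.unop.obj.leftAdjoint, inferInstance⟩, ⟨Iso.op <| (ObjectProperty.ι _).preimageIso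
      ((Adjunction.ofIsLeftAdjoint _).rightAdjointUniq (.ofIsRightAdjoint G.unop.obj)).symm⟩⟩

instance : (rightAdjointFunctor (C := C) (D := D)).IsEquivalence where

noncomputable def equivRightAdjointsOp : LeftAdjoints C D ≌ (RightAdjoints C D)ᵒᵖ :=
  rightAdjointFunctor.asEquivalence

end LeftAdjoints

lemma nonempty_preservesColimitsOfSize_eq_isLeftAdjoint
    (h : ∀ F : C ⥤ D, [PreservesColimitsOfSize.{w, w'} F] → F.IsLeftAdjoint) :
    (fun F : C ⥤ D => Nonempty (PreservesColimitsOfSize.{w, w'} F)) =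
      fun F => F.IsLeftAdjoint := by
  funext F
  exact propext ⟨fun ⟨_⟩ => h F, fun _ => ⟨inferInstance⟩⟩

lemma nonempty_preservesLimitsOfSize_eq_isRightAdjoint
    (h : ∀ G : D ⥤ C, [PreservesLimitsOfSize.{w, w'} G] → G.IsRightAdjoint) :
    (fun G : D ⥤ C => Nonempty (PreservesLimitsOfSize.{w, w'} G)) =
      fun G => G.IsRightAdjoint := by
  funext G
  exact propext ⟨fun ⟨_⟩ => h G, fun _ => ⟨inferInstance⟩⟩

end CategoryTheory

theorem stmt18 {A : Type v₁} [Category.{u} A] {B : Type v₂} [Category.{u} B]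
    (hA : ∀ (C : Type v₂) [Category.{u} C] (F : A ⥤ C)
      [PreservesColimitsOfSize.{u, u} F], F.IsLeftAdjoint)
    (hB : ∀ (C : Type v₁) [Category.{u} C] (G : B ⥤ C)
      [PreservesLimitsOfSize.{u, u} G], G.IsRightAdjoint) :
    Nonempty ((ObjectProperty.FullSubcategory fun F : A ⥤ B =>
        Nonempty (PreservesColimitsOfSize.{u, u} F)) ≌
      (ObjectProperty.FullSubcategory fun G : B ⥤ A =>
        Nonempty (PreservesLimitsOfSize.{u, u} G))ᵒᵖ) :=
  ⟨(ObjectProperty.fullSubcategoryCongr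
      (nonempty_preservesColimitsOfSize_eq_isLeftAdjoint (hA B))).trans <|
    LeftAdjoints.equivRightAdjointsOp.trans <| (ObjectProperty.fullSubcategoryCongr
      (nonempty_preservesLimitsOfSize_eq_isRightAdjoint (hB A))).symm.op⟩
end
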